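/- arXiv:2208.10780 — 3 statements merged into one kernel-verified Lean document; each statement's English description precedes it below -/
import Mathlib

section
/- Fix t ∈ ℝ and p ∈ ℝⁿ. Let v : ℝ × ℝⁿ → ℝⁿ, and let Φ : ℝ × ℝⁿ → ℝⁿ be of class C² with Φ(t,q) = q for all q and ∂Φ/∂τ(τ,q) = v(τ, Φ(τ,q)) for all (τ,q); write F(τ) := d_qΦ(τ,p) and assume F(τ) is invertible for τ in a neighborhood of t. Let w : ℝ × ℝⁿ → ℝⁿ be of class C¹. Then the map τ ↦ F(τ)⁻¹ (w(τ, Φ(τ,p))) (the pull-back of w by the flow) is differentiable at τ = t, and its derivative there equals ∂w/∂t(t,p) + dw(t,p)·v(t,p) − dv(t,p)·w(t,p), i.e. equals the Lie derivative ℒ_v w at (t,p). -/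
/-!
Since `Φ(t, ·) = id`, `F(t) = 1`, so the derivative of `τ ↦ F(τ)⁻¹` at `t` is `-F'(t)`. By the
symmetry of the second derivative of the `C²` map `Φ`, `F'(t) = ∂_τ d_qΦ = d_q ∂_τΦ = dv(t,p)`.
The chain rule gives `d/dτ w(τ, Φ(τ,p)) = ∂w/∂t + dw·v` at `t`, and the product rule combines
the two into `∂w/∂t + dw·v − dv·w`.
-/

open ContinuousLinearMap

section PartialDerivatives

variable {E G : Type*} [NormedAddCommGroup E] [NormedSpace ℝ E]
  [NormedAddCommGroup G] [NormedSpace ℝ G] {f : ℝ × E → G} {f' : ℝ × E →L[ℝ] G} {τ : ℝ} {q : E}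

theorem HasFDerivAt.hasDerivAt_comp_prodMk_const (hf : HasFDerivAt f f' (τ, q)) :
    HasDerivAt (fun s => f (s, q)) (f' (1, 0)) τ :=
  hf.comp_hasDerivAt τ ((hasDerivAt_id τ).prodMk (hasDerivAt_const τ q))

theorem HasFDerivAt.comp_const_prodMk (hf : HasFDerivAt f f' (τ, q)) :
    HasFDerivAt (fun y => f (τ, y)) (f'.comp (inr ℝ ℝ E)) q :=
  hf.comp q (hasFDerivAt_prodMk_right τ q)

theorem DifferentiableAt.hasDerivAt_comp_prodMk {c : ℝ → E} {u : E}
    (hf : DifferentiableAt ℝ f (τ, c τ)) (hc : HasDerivAt c u τ) :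
    HasDerivAt (fun s => f (s, c s))
      (deriv (fun s => f (s, c τ)) τ + fderiv ℝ (fun y => f (τ, y)) (c τ) u) τ := by
  have hf' := hf.hasFDerivAt
  rw [hf'.hasDerivAt_comp_prodMk_const.deriv, hf'.comp_const_prodMk.fderiv, comp_apply,
    ← map_add]
  have h := hf'.comp_hasDerivAt τ ((hasDerivAt_id τ).prodMk hc)
  rwa [show ((1 : ℝ), u) = (1, 0) + inr ℝ ℝ E u by simp] at h

/-- Schwarz: `∂_τ d_y f = d_y ∂_τ f` for `C²` maps `f`. -/
theorem ContDiff.hasDerivAt_fderiv_slice (hf : ContDiff ℝ 2 f) {V : E → G}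
    (hV : ∀ y, deriv (fun s => f (s, y)) τ = V y) (p : E) :
    HasDerivAt (fun s => fderiv ℝ (fun y => f (s, y)) p) (fderiv ℝ V p) τ := by
  have hf1 : Differentiable ℝ f := hf.differentiable (by norm_num)
  have hD : Differentiable ℝ (fderiv ℝ f) :=
    (hf.fderiv_right (m := 1) (by norm_num)).differentiable (by norm_num)
  have hslice : ∀ s, fderiv ℝ (fun y => f (s, y)) p = (fderiv ℝ f (s, p)).comp (inr ℝ ℝ E) :=
    fun s => (hf1 (s, p)).hasFDerivAt.comp_const_prodMk.fderiv
  have hVeq : V = fun y => fderiv ℝ f (τ, y) (1, 0) :=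
    funext fun y => (hV y).symm.trans (hf1 (τ, y)).hasFDerivAt.hasDerivAt_comp_prodMk_const.deriv
  have hsymm := hf.contDiffAt.isSymmSndFDerivAt (x := (τ, p)) (by simp)
  have hV' : HasFDerivAt V ((fderiv ℝ (fderiv ℝ f) (τ, p) (1, 0)).comp (inr ℝ ℝ E)) p := by
    rw [hVeq]
    convert (hD (τ, p)).hasFDerivAt.comp_const_prodMk.clm_apply
      (hasFDerivAt_const ((1 : ℝ), (0 : E)) p) using 1
    ext e
    simpa using hsymm (1, 0) (0, e)
  simp only [hslice, hV'.fderiv]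
  exact (hD (τ, p)).hasFDerivAt.hasDerivAt_comp_prodMk_const.clm_comp
    (hasDerivAt_const τ (inr ℝ ℝ E)) |>.congr_deriv (by simp)

end PartialDerivatives

theorem HasDerivAt.ringInverse {𝕜 R : Type*} [NontriviallyNormedField 𝕜] [NormedRing R]
    [HasSummableGeomSeries R] [NormedAlgebra 𝕜 R] {A : 𝕜 → R} {A' : R} {t : 𝕜}
    (hA : HasDerivAt A A' t) (ht : IsUnit (A t)) :
    HasDerivAt (fun s => Ring.inverse (A s))
      (-(Ring.inverse (A t) * A' * Ring.inverse (A t))) t := by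
  obtain ⟨u, hu⟩ := ht
  have hinv : HasFDerivAt Ring.inverse (-mulLeftRight 𝕜 R ↑u⁻¹ ↑u⁻¹) (A t) :=
    hu ▸ hasFDerivAt_ringInverse u
  rw [← hu, Ring.inverse_unit]
  exact hinv.comp_hasDerivAt t hA |>.congr_deriv (by simp)

theorem lie_derivative_vector_field_pullback_general
    (n : ℕ) (t : ℝ) (p : EuclideanSpace ℝ (Fin n))
    (v Φ : ℝ × EuclideanSpace ℝ (Fin n) → EuclideanSpace ℝ (Fin n))
    (hΦ : ContDiff ℝ 2 Φ)
    (hid : ∀ q, Φ (t, q) = q)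
    (hflow : ∀ (τ : ℝ) (q : EuclideanSpace ℝ (Fin n)),
      deriv (fun s => Φ (s, q)) τ = v (τ, Φ (τ, q)))
    (F : ℝ → EuclideanSpace ℝ (Fin n) →L[ℝ] EuclideanSpace ℝ (Fin n))
    (hF : ∀ τ, F τ = fderiv ℝ (fun y => Φ (τ, y)) p)
    (w : ℝ × EuclideanSpace ℝ (Fin n) → EuclideanSpace ℝ (Fin n))
    (hw : ContDiff ℝ 1 w) :
    HasDerivAt (fun τ => Ring.inverse (F τ) (w (τ, Φ (τ, p))))
      (deriv (fun s => w (s, p)) t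
        + fderiv ℝ (fun y => w (t, y)) p (v (t, p))
        - fderiv ℝ (fun y => v (t, y)) p (w (t, p))) t := by
  have hvel : ∀ q, deriv (fun s => Φ (s, q)) t = v (t, q) := fun q => by rw [hflow, hid]
  have hFt : F t = 1 := by
    rw [hF, show (fun y => Φ (t, y)) = id from funext hid, fderiv_id]
    rfl
  have hF' : HasDerivAt F (fderiv ℝ (fun y => v (t, y)) p) t := by
    simpa only [← hF] using hΦ.hasDerivAt_fderiv_slice hvel p
  have hcurve : HasDerivAt (fun s => Φ (s, p)) (v (t, p)) t := by
    rw [← hvel]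
    exact (hΦ.differentiable (by norm_num) (t, p)).hasFDerivAt
      |>.hasDerivAt_comp_prodMk_const.differentiableAt.hasDerivAt
  have hW := (hw.differentiable one_ne_zero (t, Φ (t, p))).hasDerivAt_comp_prodMk hcurve
  rw [hid] at hW
  refine (hF'.ringInverse (hFt ▸ isUnit_one)).clm_apply hW |>.congr_deriv ?_
  simp only [hFt, Ring.inverse_one, one_mul, mul_one, hid, neg_apply, one_apply_eq_self]
  abel

/-- **Lie derivative of a vector field as derivative of the pull-back by the flow.**
If `Φ` is the flow of `v` started at time `t` (`Φ(t,q) = q`,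
`∂Φ/∂τ = v(τ,Φ)`), `F(τ) = d_qΦ(τ,p)` is invertible near `t` and `w` is a `C¹`
time-dependent vector field, then `τ ↦ F(τ)⁻¹ (w(τ, Φ(τ,p)))` is differentiable
at `τ = t` with derivative `ℒ_v w (t,p) = ∂w/∂t + dw·v − dv·w` at `(t,p)`. -/
theorem lie_derivative_vector_field_pullback
    (n : ℕ) (t : ℝ) (p : EuclideanSpace ℝ (Fin n))
    (v Φ : ℝ × EuclideanSpace ℝ (Fin n) → EuclideanSpace ℝ (Fin n))
    (hΦ : ContDiff ℝ 2 Φ)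
    (hid : ∀ q, Φ (t, q) = q)
    (hflow : ∀ (τ : ℝ) (q : EuclideanSpace ℝ (Fin n)),
      deriv (fun s => Φ (s, q)) τ = v (τ, Φ (τ, q)))
    (F : ℝ → EuclideanSpace ℝ (Fin n) →L[ℝ] EuclideanSpace ℝ (Fin n))
    (hF : ∀ τ, F τ = fderiv ℝ (fun y => Φ (τ, y)) p)
    (hinv : ∀ᶠ τ in nhds t, IsUnit (F τ))
    (w : ℝ × EuclideanSpace ℝ (Fin n) → EuclideanSpace ℝ (Fin n))
    (hw : ContDiff ℝ 1 w) :
    HasDerivAt (fun τ => Ring.inverse (F τ) (w (τ, Φ (τ, p))))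
      (deriv (fun s => w (s, p)) t
        + fderiv ℝ (fun y => w (t, y)) p (v (t, p))
        - fderiv ℝ (fun y => v (t, y)) p (w (t, p))) t :=
  lie_derivative_vector_field_pullback_general n t p v Φ hΦ hid hflow F hF w hw
end

section
/- Let v : ℝ × ℝⁿ → ℝⁿ be a time-dependent vector field and α : ℝ × ℝⁿ → (ℝⁿ)* a time-dependent one-form, both of class C². Then the second-order Lie derivative satisfies, at every point (t,x): ℒ_v(ℒ_v α) = ∂²α/∂t² + 2 d(∂α/∂t)·v + 2 (∂α/∂t)∘dv + dα·(∂v/∂t) + α∘(∂(dv)/∂t) + d²α(v,v) + dα·(dv·v) + 2 (dα·v)∘dv + α∘(d²v·v) + (α∘dv)∘dv, where d² denotes the second spatial Fréchet differential. -/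
/-! Both Lie derivatives are expanded by the product rule, separately in `t` and in `x`. Every
resulting term appears in the formula except `∂(dα)/∂t · v`, which equals `d(∂α/∂t) · v` by the
symmetry of the second Fréchet derivative of `α` on `ℝ × ℝⁿ`; it then doubles the term
`d(∂α/∂t) · v` coming from the spatial derivative. -/

noncomputable section

variable {E : Type*} [NormedAddCommGroup E] [NormedSpace ℝ E]

/-- Time partial derivative `∂f/∂t (t,x)` of a time-dependent field. -/
def timeDeriv {F : Type*} [NormedAddCommGroup F] [NormedSpace ℝ F]
    (f : ℝ × E → F) (t : ℝ) (x : E) : F :=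
  deriv (fun s => f (s, x)) t

/-- Spatial Fréchet differential `df (t,x)` of a time-dependent field. -/
def spaceDeriv {F : Type*} [NormedAddCommGroup F] [NormedSpace ℝ F]
    (f : ℝ × E → F) (t : ℝ) (x : E) : E →L[ℝ] F :=
  fderiv ℝ (fun y => f (t, y)) x

/-- Lie derivative of a time-dependent one-form `α` along the velocity field `v`:
`ℒ_v α = ∂α/∂t + dα·v + α∘dv`. -/
def lieDerivA (v : ℝ × E → E) (α : ℝ × E → (E →L[ℝ] ℝ)) : ℝ × E → (E →L[ℝ] ℝ) := fun q =>
  timeDeriv α q.1 q.2 + spaceDeriv α q.1 q.2 (v q) + (α q).comp (spaceDeriv v q.1 q.2)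

variable {F : Type*} [NormedAddCommGroup F] [NormedSpace ℝ F] {f : ℝ × E → F} {t : ℝ} {x : E}

theorem DifferentiableAt.hasDerivAt_timeDeriv (hf : DifferentiableAt ℝ f (t, x)) :
    HasDerivAt (fun s => f (s, x)) (timeDeriv f t x) t :=
  (hf.comp t (differentiableAt_id.prodMk (differentiableAt_const x))).hasDerivAt

theorem DifferentiableAt.hasFDerivAt_spaceDeriv (hf : DifferentiableAt ℝ f (t, x)) :
    HasFDerivAt (fun y => f (t, y)) (spaceDeriv f t x) x :=
  (hf.comp x ((differentiableAt_const t).prodMk differentiableAt_id)).hasFDerivAt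

theorem timeDeriv_eq_fderiv (hf : DifferentiableAt ℝ f (t, x)) :
    timeDeriv f t x = fderiv ℝ f (t, x) (1, 0) :=
  (hf.hasFDerivAt.comp_hasDerivAt t ((hasDerivAt_id t).prodMk (hasDerivAt_const t x))).deriv

theorem spaceDeriv_eq_fderiv (hf : DifferentiableAt ℝ f (t, x)) :
    spaceDeriv f t x = (fderiv ℝ f (t, x)).comp (ContinuousLinearMap.inr ℝ ℝ E) :=
  (hf.hasFDerivAt.comp x ((hasFDerivAt_const t x).prodMk (hasFDerivAt_id x))).fderiv

theorem ContDiff.timeDeriv {n : WithTop ℕ∞} (hf : ContDiff ℝ (n + 1) f) :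
    ContDiff ℝ n (fun q : ℝ × E => timeDeriv f q.1 q.2) := by
  have hf1 : Differentiable ℝ f := hf.differentiable (by simp)
  simp_rw [timeDeriv_eq_fderiv (hf1 _)]
  exact (hf.fderiv_right le_rfl).clm_apply contDiff_const

theorem ContDiff.spaceDeriv {n : WithTop ℕ∞} (hf : ContDiff ℝ (n + 1) f) :
    ContDiff ℝ n (fun q : ℝ × E => spaceDeriv f q.1 q.2) := by
  have hf1 : Differentiable ℝ f := hf.differentiable (by simp)
  simp_rw [spaceDeriv_eq_fderiv (hf1 _)]
  exact (hf.fderiv_right le_rfl).clm_comp contDiff_const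

theorem timeDeriv_spaceDeriv_comm (hf : ContDiff ℝ 2 f) (t : ℝ) (x : E) :
    timeDeriv (fun q => spaceDeriv f q.1 q.2) t x
      = spaceDeriv (fun q => timeDeriv f q.1 q.2) t x := by
  have hf1 : Differentiable ℝ f := hf.differentiable two_ne_zero
  have hD : DifferentiableAt ℝ (fderiv ℝ f) (t, x) :=
    (hf.fderiv_right (m := 1) le_rfl).differentiable one_ne_zero _
  simp_rw [timeDeriv_eq_fderiv (hf1 _), spaceDeriv_eq_fderiv (hf1 _)]
  rw [timeDeriv_eq_fderiv (hD.clm_comp (differentiableAt_const _)),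
    spaceDeriv_eq_fderiv (hD.clm_apply (differentiableAt_const _)),
    fderiv_clm_comp hD (differentiableAt_const _), fderiv_clm_apply hD (differentiableAt_const _)]
  ext w
  simpa using hf.contDiffAt.isSymmSndFDerivAt (by simp) (1, 0) (0, w)

variable {v : ℝ × E → E} {α : ℝ × E → (E →L[ℝ] ℝ)}

theorem timeDeriv_lieDerivA (hv : ContDiff ℝ 2 v) (hα : ContDiff ℝ 2 α) (t : ℝ) (x : E) :
    timeDeriv (lieDerivA v α) t x
      = timeDeriv (fun q => timeDeriv α q.1 q.2) t x
        + spaceDeriv (fun q => timeDeriv α q.1 q.2) t x (v (t, x))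
        + spaceDeriv α t x (timeDeriv v t x)
        + (timeDeriv α t x).comp (spaceDeriv v t x)
        + (α (t, x)).comp (timeDeriv (fun q => spaceDeriv v q.1 q.2) t x) := by
  have hαt := (hα.timeDeriv (n := 1)).differentiable one_ne_zero (t, x)
  have hαx := (hα.spaceDeriv (n := 1)).differentiable one_ne_zero (t, x)
  have hvx := (hv.spaceDeriv (n := 1)).differentiable one_ne_zero (t, x)
  have hα1 := hα.differentiable two_ne_zero (t, x)
  have hv1 := hv.differentiable two_ne_zero (t, x)
  rw [← timeDeriv_spaceDeriv_comm hα]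
  have h : HasDerivAt (fun s => lieDerivA v α (s, x)) _ t :=
    (hαt.hasDerivAt_timeDeriv.add (hαx.hasDerivAt_timeDeriv.clm_apply hv1.hasDerivAt_timeDeriv)).add
      (hα1.hasDerivAt_timeDeriv.clm_comp hvx.hasDerivAt_timeDeriv)
  rw [timeDeriv, h.deriv]
  abel

theorem spaceDeriv_lieDerivA (hv : ContDiff ℝ 2 v) (hα : ContDiff ℝ 2 α) (t : ℝ) (x w : E) :
    spaceDeriv (lieDerivA v α) t x w
      = spaceDeriv (fun q => timeDeriv α q.1 q.2) t x w
        + spaceDeriv (fun q => spaceDeriv α q.1 q.2) t x w (v (t, x))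
        + spaceDeriv α t x (spaceDeriv v t x w)
        + (spaceDeriv α t x w).comp (spaceDeriv v t x)
        + (α (t, x)).comp (spaceDeriv (fun q => spaceDeriv v q.1 q.2) t x w) := by
  have hαt := (hα.timeDeriv (n := 1)).differentiable one_ne_zero (t, x)
  have hαx := (hα.spaceDeriv (n := 1)).differentiable one_ne_zero (t, x)
  have hvx := (hv.spaceDeriv (n := 1)).differentiable one_ne_zero (t, x)
  have hα1 := hα.differentiable two_ne_zero (t, x)
  have hv1 := hv.differentiable two_ne_zero (t, x)
  have h : HasFDerivAt (fun y => lieDerivA v α (t, y)) _ x :=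
    (hαt.hasFDerivAt_spaceDeriv.add
        (hαx.hasFDerivAt_spaceDeriv.clm_apply hv1.hasFDerivAt_spaceDeriv)).add
      (hα1.hasFDerivAt_spaceDeriv.clm_comp hvx.hasFDerivAt_spaceDeriv)
  rw [spaceDeriv, h.fderiv]
  simp only [add_apply, ContinuousLinearMap.comp_apply, ContinuousLinearMap.flip_apply,
    ContinuousLinearMap.compL_apply]
  abel

/-- **Second-order Lie derivative of a one-form.** For a `C²` time-dependent velocity
field `v` and one-form `α` on `ℝⁿ`, at every point `(t,x)`:
`ℒ_v(ℒ_v α) = ∂²α/∂t² + 2 d(∂α/∂t)·v + 2 (∂α/∂t)∘dv + dα·(∂v/∂t) + α∘(∂(dv)/∂t)`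
`+ d²α(v,v) + dα·(dv·v) + 2 (dα·v)∘dv + α∘(d²v·v) + (α∘dv)∘dv`. -/
theorem second_order_lie_derivative_one_form
    (n : ℕ) (v : ℝ × EuclideanSpace ℝ (Fin n) → EuclideanSpace ℝ (Fin n))
    (α : ℝ × EuclideanSpace ℝ (Fin n) → (EuclideanSpace ℝ (Fin n) →L[ℝ] ℝ))
    (hv : ContDiff ℝ 2 v) (hα : ContDiff ℝ 2 α)
    (t : ℝ) (x : EuclideanSpace ℝ (Fin n)) :
    lieDerivA v (lieDerivA v α) (t, x)
      = timeDeriv (fun q => timeDeriv α q.1 q.2) t x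
        + (2 : ℝ) • spaceDeriv (fun q => timeDeriv α q.1 q.2) t x (v (t, x))
        + (2 : ℝ) • (timeDeriv α t x).comp (spaceDeriv v t x)
        + spaceDeriv α t x (timeDeriv v t x)
        + (α (t, x)).comp (timeDeriv (fun q => spaceDeriv v q.1 q.2) t x)
        + spaceDeriv (fun q => spaceDeriv α q.1 q.2) t x (v (t, x)) (v (t, x))
        + spaceDeriv α t x (spaceDeriv v t x (v (t, x)))
        + (2 : ℝ) • (spaceDeriv α t x (v (t, x))).comp (spaceDeriv v t x)
        + (α (t, x)).comp (spaceDeriv (fun q => spaceDeriv v q.1 q.2) t x (v (t, x)))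
        + ((α (t, x)).comp (spaceDeriv v t x)).comp (spaceDeriv v t x) := by
  change timeDeriv (lieDerivA v α) t x + spaceDeriv (lieDerivA v α) t x (v (t, x))
      + (lieDerivA v α (t, x)).comp (spaceDeriv v t x) = _
  rw [timeDeriv_lieDerivA hv hα, spaceDeriv_lieDerivA hv hα]
  ext w
  simp only [lieDerivA, ContinuousLinearMap.add_comp, add_apply, ContinuousLinearMap.comp_apply,
    smul_apply, smul_eq_mul]
  ring

end
end

section
/- Let Θ : ℝ × ℝⁿ → ℝⁿ be of class C² and such that Θ_t := Θ(t,·) is a C² diffeomorphism of ℝⁿ for each t. Let v_B, u_B : ℝ × ℝⁿ → ℝⁿ be of class C¹, and define v_A, u_A : ℝ × ℝⁿ → ℝⁿ by: for y = Θ(t,x), u_A(t,y) := d_xΘ(t,x)·u_B(t,x) (the objective transform, i.e. push-forward, of u_B by Θ_t) and v_A(t,y) := ∂Θ/∂t(t,x) + d_xΘ(t,x)·v_B(t,x) (the velocity addition formula). Assume v_A and u_A are of class C¹. Then the Lie derivative is objective: for all t and x, (ℒ_{v_A} u_A)(t, Θ(t,x)) = d_xΘ(t,x)·(ℒ_{v_B}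 u_B)(t,x), i.e. ℒ_{v_A} u_A is the push-forward of ℒ_{v_B} u_B by Θ_t. -/
noncomputable section

variable {E : Type*} [NormedAddCommGroup E] [NormedSpace ℝ E]

/-- Lie derivative of a time-dependent vector field `u` along the velocity field `v`:
`ℒ_v u = ∂u/∂t + du·v − dv·u`. -/
def lieDerivV (v u : ℝ × E → E) : ℝ × E → E := fun q =>
  timeDeriv u q.1 q.2 + spaceDeriv u q.1 q.2 (v q) - spaceDeriv v q.1 q.2 (u q)

/-!
Lift everything to space-time `ℝ × E`: a velocity field `v` becomes `(1, v)` (that is, `∂ₜ + v`)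
and a vector field `u` becomes `(0, u)`, so that `ℒ_v u` is the spatial part of the Lie bracket
`[(1, v), (0, u)]`. For `Φ (t, x) = (t, Θ (t, x))`, the velocity addition formula and the
objective transform say exactly that `(1, v_A)` and `(0, u_A)` are `Φ`-related to `(1, v_B)` and
`(0, u_B)`. Lie brackets of `Φ`-related fields are `Φ`-related, since the second-derivative terms
of `Φ` cancel by symmetry.
-/

open VectorField Filter Topology ContDiff

section RelatedVectorFields

variable {𝕜 : Type*} [NontriviallyNormedField 𝕜]
  {F G : Type*} [NormedAddCommGroup F] [NormedSpace 𝕜 F] [NormedAddCommGroup G] [NormedSpace 𝕜 G]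
  {n : ℕ∞ω} {Φ : F → G} {V W : F → F} {V' W' : G → G} {x : F}

theorem lieBracket_apply_eq_fderiv_apply_lieBracket_of_related
    (hn : minSmoothness 𝕜 2 ≤ n) (hΦ : ContDiffAt 𝕜 n Φ x)
    (hV : DifferentiableAt 𝕜 V x) (hW : DifferentiableAt 𝕜 W x)
    (hV' : DifferentiableAt 𝕜 V' (Φ x)) (hW' : DifferentiableAt 𝕜 W' (Φ x))
    (hVV' : (fun y ↦ V' (Φ y)) =ᶠ[𝓝 x] fun y ↦ fderiv 𝕜 Φ y (V y))
    (hWW' : (fun y ↦ W' (Φ y)) =ᶠ[𝓝 x] fun y ↦ fderiv 𝕜 Φ y (W y)) :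
    lieBracket 𝕜 V' W' (Φ x) = fderiv 𝕜 Φ x (lieBracket 𝕜 V W x) := by
  have hΦd : DifferentiableAt 𝕜 Φ x :=
    (hΦ.of_le (le_minSmoothness.trans hn)).differentiableAt two_ne_zero
  rw [fderiv_apply_lieBracket hΦ hn hW hV, ← hWW'.fderiv_eq, ← hVV'.fderiv_eq,
    fderiv_fun_comp x hW' hΦd, fderiv_fun_comp x hV' hΦd, ContinuousLinearMap.comp_apply,
    ContinuousLinearMap.comp_apply, ← hVV'.eq_of_nhds, ← hWW'.eq_of_nhds, lieBracket_eq]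

end RelatedVectorFields

section Spacetime

variable {F : Type*} [NormedAddCommGroup F] [NormedSpace ℝ F]

theorem fderiv_apply_eq_timeDeriv_add_spaceDeriv {f : ℝ × E → F} {t : ℝ} {x : E}
    (hf : DifferentiableAt ℝ f (t, x)) (s : ℝ) (w : E) :
    fderiv ℝ f (t, x) (s, w) = s • timeDeriv f t x + spaceDeriv f t x w := by
  have htime : timeDeriv f t x = fderiv ℝ f (t, x) (1, 0) :=
    (hf.hasFDerivAt.comp t (hasFDerivAt_prodMk_left t x) :
      HasFDerivAt (fun s ↦ f (s, x)) ((fderiv ℝ f (t, x)).comp (.inl ℝ ℝ E)) t).hasDerivAt.deriv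
  have hspace : spaceDeriv f t x = (fderiv ℝ f (t, x)).comp (.inr ℝ ℝ E) :=
    (hf.hasFDerivAt.comp x (hasFDerivAt_prodMk_right t x)).fderiv
  have hsw : ((s, w) : ℝ × E) = s • ((1 : ℝ), (0 : E)) + ((0 : ℝ), w) := by simp
  rw [htime, hspace, hsw, map_add, map_smul]
  rfl

theorem lieBracket_prodMk_one_prodMk_zero {v u : ℝ × E → E} {z : ℝ × E}
    (hv : DifferentiableAt ℝ v z) (hu : DifferentiableAt ℝ u z) :
    lieBracket ℝ (fun z ↦ ((1 : ℝ), v z)) (fun z ↦ ((0 : ℝ), u z)) z = (0, lieDerivV v u z) := by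
  obtain ⟨t, x⟩ := z
  simp only [lieBracket_eq]
  rw [((hasFDerivAt_const _ _).prodMk hv.hasFDerivAt).fderiv,
    ((hasFDerivAt_const _ _).prodMk hu.hasFDerivAt).fderiv]
  simp [fderiv_apply_eq_timeDeriv_add_spaceDeriv hu, fderiv_apply_eq_timeDeriv_add_spaceDeriv hv,
    lieDerivV]

end Spacetime

theorem lie_derivative_objectivity_general
    (n : ℕ) (Θ : ℝ × EuclideanSpace ℝ (Fin n) → EuclideanSpace ℝ (Fin n))
    (hΘ : ContDiff ℝ 2 Θ)
    (vB uB vA uA : ℝ × EuclideanSpace ℝ (Fin n) → EuclideanSpace ℝ (Fin n))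
    (hvB : ContDiff ℝ 1 vB) (huB : ContDiff ℝ 1 uB)
    (hvA : ContDiff ℝ 1 vA) (huA : ContDiff ℝ 1 uA)
    (huAdef : ∀ (t : ℝ) (x : EuclideanSpace ℝ (Fin n)),
      uA (t, Θ (t, x)) = spaceDeriv Θ t x (uB (t, x)))
    (hvAdef : ∀ (t : ℝ) (x : EuclideanSpace ℝ (Fin n)),
      vA (t, Θ (t, x)) = timeDeriv Θ t x + spaceDeriv Θ t x (vB (t, x))) :
    ∀ (t : ℝ) (x : EuclideanSpace ℝ (Fin n)),
      lieDerivV vA uA (t, Θ (t, x)) = spaceDeriv Θ t x (lieDerivV vB uB (t, x)) := by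
  intro t x
  have hΘd : Differentiable ℝ Θ := hΘ.differentiable two_ne_zero
  set Φ : ℝ × EuclideanSpace ℝ (Fin n) → ℝ × EuclideanSpace ℝ (Fin n) := fun z ↦ (z.1, Θ z)
  have hdΦ : ∀ z w, fderiv ℝ Φ z w = (w.1, fderiv ℝ Θ z w) := fun z w ↦ by
    rw [(hasFDerivAt_fst.prodMk (hΘd z).hasFDerivAt).fderiv]; rfl
  have hvA_related : (fun z ↦ ((1 : ℝ), vA (Φ z))) = fun z ↦ fderiv ℝ Φ z (1, vB z) := by
    ext1 ⟨s, y⟩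
    simp [Φ, hdΦ, fderiv_apply_eq_timeDeriv_add_spaceDeriv (hΘd _), hvAdef]
  have huA_related : (fun z ↦ ((0 : ℝ), uA (Φ z))) = fun z ↦ fderiv ℝ Φ z (0, uB z) := by
    ext1 ⟨s, y⟩
    simp [Φ, hdΦ, fderiv_apply_eq_timeDeriv_add_spaceDeriv (hΘd _), huAdef]
  have hvBd := hvB.differentiable one_ne_zero
  have huBd := huB.differentiable one_ne_zero
  have hvAd := hvA.differentiable one_ne_zero
  have huAd := huA.differentiable one_ne_zero
  have hbracket := lieBracket_apply_eq_fderiv_apply_lieBracket_of_related (x := (t, x)) (by simp)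
    (contDiff_fst.prodMk hΘ).contDiffAt
    ((differentiableAt_const _).prodMk (hvBd _)) ((differentiableAt_const _).prodMk (huBd _))
    ((differentiableAt_const _).prodMk (hvAd _)) ((differentiableAt_const _).prodMk (huAd _))
    hvA_related.eventuallyEq huA_related.eventuallyEq
  rw [lieBracket_prodMk_one_prodMk_zero (hvAd _) (huAd _),
    lieBracket_prodMk_one_prodMk_zero (hvBd _) (huBd _), hdΦ] at hbracket
  simpa [fderiv_apply_eq_timeDeriv_add_spaceDeriv (hΘd _)] using congrArg Prod.snd hbracket

/-- **Objectivity of the Lie derivative.** Let `Θ` be a `C²` translator such that each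
`Θ(t,·)` is a `C²` diffeomorphism of `ℝⁿ`. If `u_A` is the objective transform
(push-forward) of `u_B` by `Θ(t,·)` and `v_A` is given by the velocity addition formula
`v_A(t,Θ(t,x)) = ∂Θ/∂t(t,x) + d_xΘ(t,x)·v_B(t,x)`, then `ℒ_{v_A} u_A` is the
push-forward of `ℒ_{v_B} u_B` by `Θ(t,·)`. -/
theorem lie_derivative_objectivity
    (n : ℕ) (Θ : ℝ × EuclideanSpace ℝ (Fin n) → EuclideanSpace ℝ (Fin n))
    (hΘ : ContDiff ℝ 2 Θ)
    (hdiffeo : ∀ t : ℝ, ∃ Ψ : EuclideanSpace ℝ (Fin n) → EuclideanSpace ℝ (Fin n),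
      ContDiff ℝ 2 Ψ ∧ Function.LeftInverse Ψ (fun x => Θ (t, x)) ∧
        Function.RightInverse Ψ (fun x => Θ (t, x)))
    (vB uB vA uA : ℝ × EuclideanSpace ℝ (Fin n) → EuclideanSpace ℝ (Fin n))
    (hvB : ContDiff ℝ 1 vB) (huB : ContDiff ℝ 1 uB)
    (hvA : ContDiff ℝ 1 vA) (huA : ContDiff ℝ 1 uA)
    (huAdef : ∀ (t : ℝ) (x : EuclideanSpace ℝ (Fin n)),
      uA (t, Θ (t, x)) = spaceDeriv Θ t x (uB (t, x)))
    (hvAdef : ∀ (t : ℝ) (x : EuclideanSpace ℝ (Fin n)),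
      vA (t, Θ (t, x)) = timeDeriv Θ t x + spaceDeriv Θ t x (vB (t, x))) :
    ∀ (t : ℝ) (x : EuclideanSpace ℝ (Fin n)),
      lieDerivV vA uA (t, Θ (t, x)) = spaceDeriv Θ t x (lieDerivV vB uB (t, x)) :=
  lie_derivative_objectivity_general n Θ hΘ vB uB vA uA hvB huB hvA huA huAdef hvAdef

end
end
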